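/- Let f be a nonnegative monotone submodular function on a finite ground set V with f(∅)=0, let c_1,…,c_d : V → (0,1] be cost functions, and let S* be any set with c_j(S*) ≤ 1 for all j ∈ [d]. Let S ⊆ V be a set such that for every element a ∈ S* \ S, there exists j ∈ [d] with Δ_f(a | S) < c_j(a)·φ/(1+d) for some φ > 0. Then f(S* ∪ S) − f(S) < d·φ/(1+d). -/

import Mathlib

/-! Submodularity bounds the joint gain `f (S* ∪ S) - f S` by the sum of the single-element gains
over `S* \ S`. Each of these is below `c_j(a) φ / (1 + d)` for some `j`, and charging every element
to all `d` budgets at once costs at most `∑_j c_j(S*) ≤ d`. -/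

open Finset

section Submodular

variable {V β : Type*} [DecidableEq V] [AddCommGroup β] [PartialOrder β] [IsOrderedAddMonoid β]
  {f : Finset V → β}

theorem sub_le_sum_marginal_of_disjoint
    (hsub : ∀ S T : Finset V, S ⊆ T → ∀ v ∉ T, f (insert v T) - f T ≤ f (insert v S) - f S)
    (S : Finset V) {T : Finset V} (hTS : Disjoint T S) :
    f (T ∪ S) - f S ≤ ∑ a ∈ T, (f (insert a S) - f S) := by
  induction T using Finset.induction_on with
  | empty => simp
  | @insert a T haT ih =>
    rw [disjoint_insert_left] at hTS
    have hgain := hsub S (T ∪ S) subset_union_right a (by simp [haT, hTS.1])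
    rw [insert_union, sum_insert haT]
    calc f (insert a (T ∪ S)) - f S
        = (f (insert a (T ∪ S)) - f (T ∪ S)) + (f (T ∪ S) - f S) := by abel
      _ ≤ (f (insert a S) - f S) + ∑ x ∈ T, (f (insert x S) - f S) := add_le_add hgain (ih hTS.2)

theorem sub_le_sum_marginal
    (hsub : ∀ S T : Finset V, S ⊆ T → ∀ v ∉ T, f (insert v T) - f T ≤ f (insert v S) - f S)
    (T S : Finset V) :
    f (T ∪ S) - f S ≤ ∑ a ∈ T \ S, (f (insert a S) - f S) := by
  rw [← sdiff_union_self_eq_union]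
  exact sub_le_sum_marginal_of_disjoint hsub S sdiff_disjoint

end Submodular

theorem sum_apply_le_sum_sum {ι V : Type*} [Fintype ι] {c : ι → V → ℝ} (hc : ∀ j v, 0 ≤ c j v)
    (w : V → ι) (A : Finset V) :
    ∑ a ∈ A, c (w a) a ≤ ∑ j, ∑ a ∈ A, c j a := by
  rw [sum_comm]
  exact sum_le_sum fun a _ => single_le_sum (fun j _ => hc j a) (mem_univ (w a))

theorem stmt_2_general {V : Type*} [DecidableEq V]
    (f : Finset V → ℝ)
    (hsub : ∀ S T : Finset V, S ⊆ T → ∀ v ∉ T,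
      f (insert v T) - f T ≤ f (insert v S) - f S)
    (d : ℕ) (hd : 1 ≤ d) (c : Fin d → V → ℝ)
    (hc : ∀ j v, 0 < c j v ∧ c j v ≤ 1)
    (Sstar : Finset V) (hfeas : ∀ j, ∑ v ∈ Sstar, c j v ≤ 1)
    (φ : ℝ) (hφ : 0 < φ)
    (S : Finset V)
    (hfail : ∀ a ∈ Sstar \ S,
      ∃ j, f (insert a S) - f S < c j a * φ / (1 + d)) :
    f (Sstar ∪ S) - f S < d * φ / (1 + d) := by
  -- `choose!` needs `Fin d` to be inhabited
  have : NeZero d := ⟨by omega⟩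
  choose! w hw using hfail
  have hcost : ∑ a ∈ Sstar \ S, c (w a) a ≤ d :=
    calc ∑ a ∈ Sstar \ S, c (w a) a
        ≤ ∑ j, ∑ a ∈ Sstar \ S, c j a := sum_apply_le_sum_sum (fun j v => (hc j v).1.le) w _
      _ ≤ ∑ _ : Fin d, (1 : ℝ) := sum_le_sum fun j _ =>
          (sum_le_sum_of_subset_of_nonneg sdiff_subset fun v _ _ => (hc j v).1.le).trans (hfeas j)
      _ = d := by simp
  rcases (Sstar \ S).eq_empty_or_nonempty with hnone | hne
  · rw [union_eq_right.mpr (sdiff_eq_empty_iff_subset.mp hnone), sub_self]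
    have : (0 : ℝ) < d := by exact_mod_cast hd
    positivity
  · calc f (Sstar ∪ S) - f S
        ≤ ∑ a ∈ Sstar \ S, (f (insert a S) - f S) := sub_le_sum_marginal hsub Sstar S
      _ < ∑ a ∈ Sstar \ S, c (w a) a * φ / (1 + d) := sum_lt_sum_of_nonempty hne hw
      _ = (∑ a ∈ Sstar \ S, c (w a) a) * φ / (1 + d) := by rw [sum_mul, sum_div]
      _ ≤ d * φ / (1 + d) := by gcongr

theorem stmt_2 {V : Type*} [DecidableEq V]
    (f : Finset V → ℝ)
    (hnonneg : ∀ S : Finset V, 0 ≤ f S)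
    (hempty : f ∅ = 0)
    (hmono : ∀ S T : Finset V, S ⊆ T → f S ≤ f T)
    (hsub : ∀ S T : Finset V, S ⊆ T → ∀ v ∉ T,
      f (insert v T) - f T ≤ f (insert v S) - f S)
    (d : ℕ) (hd : 1 ≤ d) (c : Fin d → V → ℝ)
    (hc : ∀ j v, 0 < c j v ∧ c j v ≤ 1)
    (Sstar : Finset V) (hfeas : ∀ j, ∑ v ∈ Sstar, c j v ≤ 1)
    (φ : ℝ) (hφ : 0 < φ)
    (S : Finset V)
    (hfail : ∀ a ∈ Sstar \ S,
      ∃ j, f (insert a S) - f S < c j a * φ / (1 + d)) :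
    f (Sstar ∪ S) - f S < d * φ / (1 + d) :=
  stmt_2_general f hsub d hd c hc Sstar hfeas φ hφ S hfail
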